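/- (Triangle inequality) Let Q, T and R be trajectories in V and s a time interval with |s| > 0. If s ⊆ I(Q), then Dist(Q,T,s) ≤ Dist(Q,R,s) + Dist(R,T,s). -/

import Mathlib

open MeasureTheory

/-- A trajectory in `V`: a nonempty list of (vertex, interval start, interval end) triples,
with integer endpoints `a < b`, consecutive intervals sharing endpoints, and consecutive
vertices distinct. -/
structure Traj (V : Type*) where
  steps : List (V × ℤ × ℤ)
  nonempty : steps ≠ []
  valid : ∀ p ∈ steps, p.2.1 < p.2.2
  chain : steps.Chain' (fun p q => p.2.2 = q.2.1 ∧ p.1 ≠ q.1)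

/-- Length (Lebesgue measure) of a set of times. -/
noncomputable def ilen (A : Set ℝ) : ℝ := (volume A).toReal

/-- The time interval of a single trajectory step. -/
def stepInt {V : Type*} (p : V × ℤ × ℤ) : Set ℝ := Set.Icc (p.2.1 : ℝ) (p.2.2 : ℝ)

/-- The total interval `I(T)` of a trajectory: from its starting time to its ending time. -/
noncomputable def totalInt {V : Type*} (T : Traj V) : Set ℝ :=
  Set.Icc (((T.steps.head T.nonempty).2.1 : ℝ)) (((T.steps.getLast T.nonempty).2.2 : ℝ))

/-- The spatio-temporal similarity `Sim(Q,T,s)`. -/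
noncomputable def Sim {V : Type*} [MetricSpace V] (Q T : Traj V) (s : Set ℝ) : ℝ :=
  (1 / ilen s) *
    (Q.steps.map (fun q =>
      (T.steps.map (fun p =>
        ilen (s ∩ stepInt p ∩ stepInt q) * Real.exp (-(dist p.1 q.1)))).sum)).sum

/-- The spatio-temporal distance `Dist(Q,T,s) = 1 - Sim(Q,T,s)`. -/
noncomputable def TrajDist {V : Type*} [MetricSpace V] (Q T : Traj V) (s : Set ℝ) : ℝ :=
  1 - Sim Q T s

/-
`Sim(A, B, s)` is the average over `s` of the density `x ↦ e^{-d(A(x), B(x))}`, where `A(x)` is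
the vertex `A` occupies at time `x` and the density is `0` when `A` or `B` is absent at time `x`.
Since consecutive steps only share endpoints, `A(x)` is well defined away from the integers, hence
almost everywhere. By the triangle inequality `e^{-d(u,w)} e^{-d(w,v)} ≤ e^{-d(u,v)}`, and as both
factors are at most `1`, `e^{-d(u,w)} + e^{-d(w,v)} ≤ 1 + e^{-d(u,v)}`. Averaging this pointwise
inequality gives `Sim(Q,R) + Sim(R,T) ≤ 1 + Sim(Q,T)`, which is the triangle inequality for `Dist`.
-/

theorem List.sum_map_ite_eq_getD_find? {α M : Type*} [AddMonoid M] {P : α → Prop}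
    [DecidablePred P] (g : α → M) {l : List α} (hl : l.Pairwise fun a b => ¬(P a ∧ P b)) :
    (l.map fun a => if P a then g a else 0).sum = ((l.find? (P ·)).map g).getD 0 := by
  induction l with
  | nil => rfl
  | cons a l ih =>
    obtain ⟨ha, hl⟩ := List.pairwise_cons.mp hl
    by_cases hPa : P a
    · have hrest : ∀ b ∈ l, ¬P b := fun b hb hPb => ha b hb ⟨hPa, hPb⟩
      simp [hPa, List.find?_cons_of_pos, List.map_congr_left fun b hb => if_neg (hrest b hb)]
    · simp [hPa, List.find?_cons_of_neg, ih hl]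

section ListIntegral

variable {α G ι : Type*} [MeasurableSpace α] {μ : Measure α} [NormedAddCommGroup G]
  {l : List ι} {f : ι → α → G}

theorem integrable_list_sum_map (hf : ∀ i ∈ l, Integrable (f i) μ) :
    Integrable (fun x => (l.map (f · x)).sum) μ := by
  simp_rw [← Fin.sum_univ_fun_getElem]
  exact integrable_finsetSum _ fun i _ => hf _ (List.getElem_mem _)

theorem integral_list_sum_map [NormedSpace ℝ G] (hf : ∀ i ∈ l, Integrable (f i) μ) :
    ∫ x, (l.map (f · x)).sum ∂μ = (l.map fun i => ∫ x, f i x ∂μ).sum := by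
  simp_rw [← Fin.sum_univ_fun_getElem]
  exact integral_finsetSum _ fun i _ => hf _ (List.getElem_mem _)

end ListIntegral

theorem exp_neg_dist_add_exp_neg_dist_le {V : Type*} [PseudoMetricSpace V] (u w v : V) :
    Real.exp (-dist u w) + Real.exp (-dist w v) ≤ 1 + Real.exp (-dist u v) := by
  have hu : Real.exp (-dist u w) ≤ 1 := Real.exp_le_one_iff.mpr (neg_nonpos.mpr dist_nonneg)
  have hv : Real.exp (-dist w v) ≤ 1 := Real.exp_le_one_iff.mpr (neg_nonpos.mpr dist_nonneg)
  have hprod : Real.exp (-dist u w) * Real.exp (-dist w v) ≤ Real.exp (-dist u v) := by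
    rw [← Real.exp_add]
    exact Real.exp_le_exp.mpr (by linarith [dist_triangle u w v])
  nlinarith [mul_nonneg (sub_nonneg.mpr hu) (sub_nonneg.mpr hv)]

section PosSim

variable {V : Type*} [PseudoMetricSpace V]

noncomputable def posSim : Option V → Option V → ℝ
  | some u, some v => Real.exp (-dist u v)
  | _, _ => 0

@[simp] theorem posSim_none_left (v : Option V) : posSim none v = 0 := rfl

@[simp] theorem posSim_none_right (u : Option V) : posSim u none = 0 := by
  cases u <;> rfl

theorem posSim_nonneg (u v : Option V) : 0 ≤ posSim u v := by
  rcases u with _ | u <;> rcases v with _ | v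
  all_goals first | exact Real.exp_nonneg _ | exact le_rfl

theorem posSim_le_one (u v : Option V) : posSim u v ≤ 1 := by
  rcases u with _ | u <;> rcases v with _ | v
  all_goals first | exact Real.exp_le_one_iff.mpr (neg_nonpos.mpr dist_nonneg) | exact zero_le_one

theorem posSim_add_posSim_le (u w v : Option V) :
    posSim u w + posSim w v ≤ 1 + posSim u v := by
  rcases w with _ | w
  · simp only [posSim_none_left, posSim_none_right, add_zero]
    linarith [posSim_nonneg u v]
  rcases u with _ | u
  · simpa using posSim_le_one (some w) v
  rcases v with _ | v
  · simpa using posSim_le_one (some u) (some w)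
  exact exp_neg_dist_add_exp_neg_dist_le u w v

end PosSim

namespace Traj

variable {V : Type*}

theorem pairwise_end_le_start (T : Traj V) : T.steps.Pairwise fun p q => p.2.2 ≤ q.2.1 := by
  let R : V × ℤ × ℤ → V × ℤ × ℤ → Prop := fun p q =>
    p.2.1 < p.2.2 ∧ p.2.2 ≤ q.2.1 ∧ q.2.1 < q.2.2
  have : Trans R R R := ⟨fun hpq hqr => ⟨hpq.1, by omega, hqr.2.2⟩⟩
  have hchain : T.steps.IsChain R := T.chain.imp_of_mem_imp
    fun p q hp hq (hpq : p.2.2 = q.2.1 ∧ p.1 ≠ q.1) => ⟨T.valid p hp, hpq.1.le, T.valid q hq⟩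
  exact (List.isChain_iff_pairwise.mp hchain).imp fun h => h.2.1

theorem pairwise_not_mem_stepInt (T : Traj V) {x : ℝ} (hx : ∀ n : ℤ, x ≠ n) :
    T.steps.Pairwise fun p q => ¬(x ∈ stepInt p ∧ x ∈ stepInt q) := by
  refine T.pairwise_end_le_start.imp fun {p q} hpq ⟨hp, hq⟩ => hx p.2.2 ?_
  have : (p.2.2 : ℝ) ≤ q.2.1 := by exact_mod_cast hpq
  exact le_antisymm hp.2 (this.trans hq.1)

open Classical in
noncomputable def vertexAt (T : Traj V) (x : ℝ) : Option V :=
  (T.steps.find? (x ∈ stepInt ·)).map Prod.fst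

end Traj

section StepIntegral

variable {V : Type*} (p q : V × ℤ × ℤ) (c : ℝ) {s : Set ℝ}

theorem measurableSet_stepInt_inter : MeasurableSet (stepInt p ∩ stepInt q) :=
  measurableSet_Icc.inter measurableSet_Icc

theorem integrableOn_indicator_stepInt_inter (hs : volume s ≠ ⊤) :
    IntegrableOn ((stepInt p ∩ stepInt q).indicator fun _ => c) s :=
  (integrableOn_const hs).indicator (measurableSet_stepInt_inter p q)

theorem setIntegral_indicator_stepInt_inter :
    ∫ x in s, (stepInt p ∩ stepInt q).indicator (fun _ => c) x =
      ilen (s ∩ stepInt p ∩ stepInt q) * c := by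
  rw [setIntegral_indicator (measurableSet_stepInt_inter p q), setIntegral_const,
    ← Set.inter_assoc, smul_eq_mul]
  rfl

end StepIntegral

section Similarity

variable {V : Type*} [MetricSpace V]

noncomputable def simDensity (A B : Traj V) (x : ℝ) : ℝ :=
  (A.steps.map fun q => (B.steps.map fun p =>
    (stepInt p ∩ stepInt q).indicator (fun _ => Real.exp (-dist p.1 q.1)) x).sum).sum

theorem simDensity_eq_posSim (A B : Traj V) {x : ℝ} (hx : ∀ n : ℤ, x ≠ n) :
    simDensity A B x = posSim (A.vertexAt x) (B.vertexAt x) := by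
  classical
  have hinner : ∀ q : V × ℤ × ℤ, (B.steps.map fun p =>
      (stepInt p ∩ stepInt q).indicator (fun _ => Real.exp (-dist p.1 q.1)) x).sum =
      if x ∈ stepInt q then
        ((B.steps.find? (x ∈ stepInt ·)).map fun p => Real.exp (-dist p.1 q.1)).getD 0
      else 0 := by
    intro q
    by_cases hq : x ∈ stepInt q
    · rw [if_pos hq, ← List.sum_map_ite_eq_getD_find? _ (B.pairwise_not_mem_stepInt hx)]
      simp [Set.indicator_apply, hq]
    · simp [hq]
  rw [simDensity, List.map_congr_left fun q _ => hinner q,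
    List.sum_map_ite_eq_getD_find? _ (A.pairwise_not_mem_stepInt hx), Traj.vertexAt,
    Traj.vertexAt]
  rcases A.steps.find? _ with _ | q <;> rcases B.steps.find? _ with _ | p <;>
    simp [posSim, dist_comm]

theorem integrableOn_simDensity (A B : Traj V) {s : Set ℝ} (hs : volume s ≠ ⊤) :
    IntegrableOn (simDensity A B) s :=
  integrable_list_sum_map fun _ _ => integrable_list_sum_map fun _ _ =>
    integrableOn_indicator_stepInt_inter _ _ _ hs

theorem sim_eq_setIntegral_simDensity_div (A B : Traj V) {s : Set ℝ} (hs : volume s ≠ ⊤) :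
    Sim A B s = (∫ x in s, simDensity A B x) / ilen s := by
  have hstep : ∀ p q : V × ℤ × ℤ, IntegrableOn
      ((stepInt p ∩ stepInt q).indicator fun _ => Real.exp (-dist p.1 q.1)) s :=
    fun p q => integrableOn_indicator_stepInt_inter p q _ hs
  unfold simDensity
  rw [Sim, one_div_mul_eq_div,
    integral_list_sum_map fun _ _ => integrable_list_sum_map fun _ _ => hstep _ _]
  refine congrArg (· / ilen s) (congrArg List.sum (List.map_congr_left fun q _ => ?_))
  rw [integral_list_sum_map fun _ _ => hstep _ _]
  exact congrArg List.sum (List.map_congr_left fun p _ =>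
    (setIntegral_indicator_stepInt_inter p q _).symm)

theorem sim_add_sim_le (Q R T : Traj V) (s : Set ℝ) :
    Sim Q R s + Sim R T s ≤ 1 + Sim Q T s := by
  by_cases h0 : ilen s = 0
  · -- `1 / 0 = 0`, so every similarity over `s` vanishes
    simp [Sim, h0]
  have hfin : volume s ≠ ⊤ := (ENNReal.toReal_ne_zero.mp h0).2
  have hpos : 0 < ilen s := lt_of_le_of_ne ENNReal.toReal_nonneg (Ne.symm h0)
  have hae : ∀ᵐ x ∂volume.restrict s,
      simDensity Q R x + simDensity R T x ≤ 1 + simDensity Q T x := by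
    -- the integers are a null set, and off them every trajectory occupies at most one vertex
    refine ae_restrict_of_ae <|
      ((Set.countable_range ((↑) : ℤ → ℝ)).ae_notMem volume).mono fun x hx => ?_
    have hx' : ∀ n : ℤ, x ≠ n := fun n h => hx ⟨n, h.symm⟩
    simp only [simDensity_eq_posSim _ _ hx']
    exact posSim_add_posSim_le _ _ _
  have hone : IntegrableOn (fun _ => (1 : ℝ)) s := integrableOn_const hfin
  have hint := integral_mono_ae
    ((integrableOn_simDensity Q R hfin).add (integrableOn_simDensity R T hfin))
    (hone.add (integrableOn_simDensity Q T hfin)) hae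
  rw [integral_add' (integrableOn_simDensity Q R hfin) (integrableOn_simDensity R T hfin),
    integral_add' hone (integrableOn_simDensity Q T hfin),
    setIntegral_const, smul_eq_mul, mul_one] at hint
  rw [sim_eq_setIntegral_simDensity_div Q R hfin, sim_eq_setIntegral_simDensity_div R T hfin,
    sim_eq_setIntegral_simDensity_div Q T hfin, ← add_div, div_le_iff₀ hpos, add_mul,
    one_mul, div_mul_cancel₀ _ h0]
  exact hint

end Similarity

theorem trajDist_triangle_general {V : Type*} [MetricSpace V] (Q T R : Traj V)
    (a b : ℤ) :
    TrajDist Q T (Set.Icc (a : ℝ) b) ≤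
      TrajDist Q R (Set.Icc (a : ℝ) b) + TrajDist R T (Set.Icc (a : ℝ) b) := by
  simp only [TrajDist]
  linarith [sim_add_sim_le Q R T (Set.Icc (a : ℝ) b)]

/-- Triangle inequality: Let `Q`, `T` and `R` be trajectories in `V` and
`s` a time interval with `|s| > 0`. If `s ⊆ I(Q)`, then
`Dist(Q,T,s) ≤ Dist(Q,R,s) + Dist(R,T,s)`. -/
theorem trajDist_triangle {V : Type*} [MetricSpace V] (Q T R : Traj V)
    (a b : ℤ) (hab : a < b) (hs : Set.Icc (a : ℝ) b ⊆ totalInt Q) :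
    TrajDist Q T (Set.Icc (a : ℝ) b) ≤
      TrajDist Q R (Set.Icc (a : ℝ) b) + TrajDist R T (Set.Icc (a : ℝ) b) :=
  trajDist_triangle_general Q T R a b
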